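/- Let (E,d) be a metric space and let K be a compact countable subset of E whose Cantor–Bendixson characteristic is (1,1), i.e. the derived set K' is a singleton. Then K, with the subspace topology, is homeomorphic to the ordinal ω+1 with its order topology. -/

import Mathlib

open Ordinal Set

/-- The `α`-th Cantor–Bendixson derivative of a set `A`, defined by transfinite
recursion: `A^(0) = A`, `A^(β+1) = (A^(β))'` (derived set in the ambient space),
and `A^(λ) = ⋂_{γ<λ} A^(γ)` at nonzero limit ordinals. -/
noncomputable def cbDeriv {X : Type*} [TopologicalSpace X] (A : Set X) (o : Ordinal) : Set X :=
  Ordinal.limitRecOn o A (fun _ ih => derivedSet ih)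
    (fun o _ ih => ⋂ (β : Ordinal) (h : β < o), ih β h)

/-- `A` has Cantor–Bendixson characteristic `(α, p)`: `α` is the least ordinal such
that the `α`-th Cantor–Bendixson derivative of `A` is finite, and that derivative has
exactly `p` elements. -/
def HasCBChar {X : Type*} [TopologicalSpace X] (A : Set X) (α : Ordinal) (p : ℕ) : Prop :=
  (cbDeriv A α).Finite ∧ (∀ β < α, ¬ (cbDeriv A β).Finite) ∧ (cbDeriv A α).ncard = p

/-! Both spaces are compact Hausdorff spaces in which every point but one is isolated and the
isolated points form a countably infinite set. Such a space is the one-point compactification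
of its (discrete) set of isolated points, hence homeomorphic to `OnePoint ℕ`. -/

universe u

section CantorBendixson

variable {X : Type*} [TopologicalSpace X]

lemma cbDeriv_zero (A : Set X) : cbDeriv A 0 = A :=
  Ordinal.limitRecOn_zero ..

lemma cbDeriv_one (A : Set X) : cbDeriv A 1 = derivedSet A := by
  rw [← zero_add 1, cbDeriv, Ordinal.limitRecOn_add_one, ← cbDeriv, cbDeriv_zero]

lemma isOpen_singleton_of_notMem_derivedSet {K : Set X} {z : X} (hz : z ∈ K)
    (hzK : z ∉ derivedSet K) : IsOpen ({⟨z, hz⟩} : Set K) := by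
  rw [mem_derivedSet, accPt_iff_frequently, Filter.not_frequently] at hzK
  rw [isOpen_iff_mem_nhds]
  rintro _ rfl
  rw [nhds_subtype, Filter.mem_comap]
  exact ⟨_, hzK, fun w hw => Subtype.ext (by_contra fun hne => hw ⟨hne, w.2⟩)⟩

end CantorBendixson

lemma isOpen_singleton_subtype {Y : Type*} [TopologicalSpace Y] {s : Set Y} {z : s}
    (hz : IsOpen ({(z : Y)} : Set Y)) : IsOpen ({z} : Set s) := by
  have h : IsOpen (((↑) : s → Y) ⁻¹' {(z : Y)}) := hz.preimage continuous_subtype_val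
  rwa [← image_singleton, Subtype.val_injective.preimage_image] at h

lemma nonempty_homeomorph_onePoint_nat {Y : Type*} [TopologicalSpace Y] [CompactSpace Y]
    [T2Space Y] (y : Y) (hiso : ∀ z ≠ y, IsOpen ({z} : Set Y))
    (hcount : ({y}ᶜ : Set Y).Countable) (hinf : ({y}ᶜ : Set Y).Infinite) :
    Nonempty (OnePoint ℕ ≃ₜ Y) := by
  have : DiscreteTopology ({y}ᶜ : Set Y) :=
    discreteTopology_iff_isOpen_singleton.mpr fun z => isOpen_singleton_subtype (hiso z z.2)
  have := hcount.to_subtype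
  have := hinf.to_subtype
  obtain ⟨e⟩ : Nonempty (ℕ ≃ ({y}ᶜ : Set Y)) := nonempty_equiv_of_countable
  exact ⟨e.toHomeomorphOfDiscrete.onePointCongr.trans <|
    OnePoint.equivOfIsEmbeddingOfRangeEq y _ Topology.IsEmbedding.subtypeVal Subtype.range_coe⟩

lemma nonempty_homeomorph_onePoint_nat_of_derivedSet_eq_singleton {X : Type*}
    [TopologicalSpace X] [T2Space X] {K : Set X} {a : X} (hK : IsCompact K) (hcount : K.Countable)
    (hinf : K.Infinite) (ha : derivedSet K = {a}) : Nonempty (OnePoint ℕ ≃ₜ K) := by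
  have haK : a ∈ K := (isClosed_iff_derivedSet_subset K).mp hK.isClosed (ha ▸ rfl)
  have := isCompact_iff_compactSpace.mp hK
  have := hcount.to_subtype
  have := hinf.to_subtype
  refine nonempty_homeomorph_onePoint_nat ⟨a, haK⟩ (fun z hz => ?_) (to_countable _)
    (finite_singleton _).infinite_compl
  exact isOpen_singleton_of_notMem_derivedSet z.2 (ha ▸ fun h => hz (Subtype.ext h))

lemma nonempty_homeomorph_onePoint_nat_Iic_omega0 :
    Nonempty (OnePoint ℕ ≃ₜ Iic (ω : Ordinal.{u})) := by
  have := isCompact_iff_compactSpace.mp (Icc_bot (a := (ω : Ordinal.{u})) ▸ isCompact_Icc)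
  let top : Iic (ω : Ordinal.{u}) := ⟨ω, mem_Iic.mpr le_rfl⟩
  let nat (n : ℕ) : Iic (ω : Ordinal.{u}) := ⟨n, (natCast_lt_omega0 n).le⟩
  have hrange : range nat = {top}ᶜ := by
    ext ⟨o, ho⟩
    simp only [mem_range, mem_compl_singleton_iff, ne_eq, Subtype.ext_iff, nat, top]
    constructor
    · rintro ⟨n, rfl⟩
      exact (natCast_lt_omega0 n).ne
    · intro hne
      obtain ⟨n, rfl⟩ := lt_omega0.mp (lt_of_le_of_ne ho hne)
      exact ⟨n, rfl⟩
  have hnat : nat.Injective := fun m n h => Nat.cast_injective (congrArg Subtype.val h)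
  refine nonempty_homeomorph_onePoint_nat top (fun z hz => ?_) (hrange ▸ countable_range nat)
    (hrange ▸ infinite_range_of_injective hnat)
  obtain ⟨n, rfl⟩ : z ∈ range nat := hrange ▸ hz
  exact isOpen_singleton_subtype <| SuccOrder.isOpen_singleton_iff.mpr
    fun h => (natCast_lt_of_isSuccLimit h n).false

theorem stmt2 {E : Type*} [MetricSpace E] (K : Set E)
    (hK : IsCompact K) (hKcount : K.Countable) (hchar : HasCBChar K 1 1) :
    Nonempty (↥K ≃ₜ ↥(Set.Iic (ω : Ordinal))) := by
  obtain ⟨-, hinf, hcard⟩ := hchar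
  rw [cbDeriv_one] at hcard
  obtain ⟨a, ha⟩ := ncard_eq_one.mp hcard
  obtain ⟨eK⟩ := nonempty_homeomorph_onePoint_nat_of_derivedSet_eq_singleton hK hKcount
    (by simpa [cbDeriv_zero] using hinf 0 zero_lt_one) ha
  obtain ⟨eω⟩ := nonempty_homeomorph_onePoint_nat_Iic_omega0
  exact ⟨eK.symm.trans eω⟩
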